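/- Let $f(\boldsymbol{\alpha}) = \sum_{k=1}^{k_0} 2\,\mathrm{li}_2(-e^{-2i\alpha_k}) + Q(\boldsymbol{\alpha})$, where $Q$ is a quadratic polynomial in $\alpha_1, \dots, \alpha_{k_0}$ with real coefficients and no constant or linear terms whose imaginary contribution is nonlinear (i.e., $\mathrm{Im}\, Q(\boldsymbol\alpha) = \sum_k y_k \partial_{y_k} \mathrm{Im}\, Q(\boldsymbol\alpha)$ where $\alpha_k = x_k + i y_k$). If $\boldsymbol{\alpha}^c$ is a critical point of $f$ (with each $\alpha_k^c$ in the domain of holomorphy), then $\mathrm{Im}\, f(\boldsymbol{\alpha}^c) = \sum_{k=1}^{k_0} 2 D(-e^{-2i\alpha_k^c})$, where $D(z) = \mathrm{Im}\,\mathrm{li}_2(z) + \arg(1-z)\log|z|$ is the Bloch–Wigner dilogarithm. -/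

import Mathlib

/-!
With `z_k = -e^{-2iα_k}`, differentiating under the integral sign gives
`li₂'(z) = -log(1 - z)/z`, hence `∂/∂α_k li₂(z_k) = 2i log(1 - z_k)`. At a critical point,
`4i log(1 - z_k) + ∂_k Q = 0`, and as `Q` has real coefficients the real part reads
`Re ∂_k Q = 4 arg(1 - z_k)`. Since `Im Q(α) = Σ_k Im α_k · Re ∂_k Q(α)` for a real quadratic
polynomial without constant term and `log |z_k| = 2 Im α_k`, this gives
`Im Q(α^c) = Σ_k 2 arg(1 - z_k) log |z_k|`, which is exactly the correction turning
`Σ_k 2 Im li₂(z_k)` into `Σ_k 2 D(z_k)`.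
-/

/-- The dilogarithm `li₂ z = -∫₀¹ log(1 - z t)/t dt`, holomorphic on `ℂ \ [1, ∞)`. -/
noncomputable def li2 (z : ℂ) : ℂ :=
  -∫ t in (0:ℝ)..1, Complex.log (1 - z * (t : ℂ)) / (t : ℂ)

/-- The Bloch–Wigner dilogarithm `D(z) = Im li₂(z) + arg(1-z) log|z|`. -/
noncomputable def blochWigner (z : ℂ) : ℝ :=
  (li2 z).im + (1 - z).arg * Real.log ‖z‖

open Complex Metric Set Function Matrix

lemma hasDerivAt_sum_apply_update {ι 𝕜 E : Type*} [Fintype ι] [DecidableEq ι]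
    [NontriviallyNormedField 𝕜] [NormedAddCommGroup E] [NormedSpace 𝕜 E]
    (g : ι → 𝕜 → E) (α : ι → 𝕜) (k : ι) {d : E} (h : HasDerivAt (g k) d (α k)) :
    HasDerivAt (fun w => ∑ j, g j (update α k w j)) d (α k) := by
  simp_rw [apply_update g, Finset.sum_update_of_mem (Finset.mem_univ k)]
  exact h.add_const _

lemma one_sub_mem_slitPlane_of_forall_ne {z : ℂ} (hz : ∀ r : ℝ, 1 ≤ r → z ≠ r) :
    1 - z ∈ slitPlane := by
  rw [mem_slitPlane_iff]
  by_contra! h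
  refine hz z.re (by simpa using h.1) (ext rfl ?_)
  simpa [eq_comm] using h.2

lemma one_sub_mul_ofReal_mem_slitPlane {z : ℂ} (hz : 1 - z ∈ slitPlane) {t : ℝ}
    (ht : t ∈ Icc (0 : ℝ) 1) : 1 - z * t ∈ slitPlane := by
  have := starConvex_one_slitPlane.add_smul_mem (y := -z) (by rwa [← sub_eq_add_neg]) ht.1 ht.2
  simpa [sub_eq_add_neg, mul_comm] using this

lemma intervalIntegrable_log_one_sub_mul_div {z : ℂ} (hz : 1 - z ∈ slitPlane) :
    IntervalIntegrable (fun t : ℝ => log (1 - z * t) / t) MeasureTheory.volume 0 1 := by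
  set g : ℝ → ℂ := fun t => log (1 - z * t)
  set s : Set ℝ := {t | 1 - z * t ∈ slitPlane}
  have hs : IsOpen s := isOpen_slitPlane.preimage (by fun_prop)
  have hIcc : Icc (0 : ℝ) 1 ⊆ s := fun t ht => one_sub_mul_ofReal_mem_slitPlane hz ht
  have hg : ContinuousOn g s := fun t ht =>
    (ContinuousAt.clog (f := fun t : ℝ => 1 - z * t) (by fun_prop) ht).continuousWithinAt
  have hg0 : DifferentiableAt ℝ g 0 := by
    have hlin : HasDerivAt (fun t : ℝ => 1 - z * t) (-z) 0 := by
      simpa using ((hasDerivAt_id (0:ℝ)).ofReal_comp.const_mul z).const_sub 1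
    exact (hlin.clog_real (by simp)).differentiableAt
  have hdslope : ContinuousOn (dslope g 0) (Icc 0 1) :=
    ((continuousOn_dslope (hs.mem_nhds (hIcc ⟨le_rfl, zero_le_one⟩))).2 ⟨hg, hg0⟩).mono hIcc
  -- the integrand is the difference quotient of `g` at `0`, so it extends continuously to `t = 0`
  rw [intervalIntegrable_iff_integrableOn_Ioc_of_le zero_le_one]
  refine (hdslope.integrableOn_Icc.mono_set Ioc_subset_Icc_self).congr_fun
    (fun t ht => ?_) measurableSet_Ioc
  rw [dslope_of_ne _ ht.1.ne', slope_def_module]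
  simp [g, div_eq_inv_mul]

lemma integral_inv_one_sub_mul {z : ℂ} (hz : 1 - z ∈ slitPlane) (hz0 : z ≠ 0) :
    ∫ t in (0:ℝ)..1, (1 - z * t)⁻¹ = -log (1 - z) / z := by
  rw [← log_inv _ (slitPlane_arg_ne_pi hz), log_inv_eq_integral hz, mul_div_cancel_left₀ _ hz0]
  simp [real_smul, mul_comm]

lemma exists_closedBall_bound_inv_one_sub_mul {z₀ : ℂ} (hz₀ : 1 - z₀ ∈ slitPlane) :
    ∃ δ > 0, ∃ C, ∀ x ∈ closedBall z₀ δ,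
      1 - x ∈ slitPlane ∧ ∀ t ∈ Icc (0 : ℝ) 1, ‖(1 - x * t)⁻¹‖ ≤ C := by
  obtain ⟨δ, hδ, hball⟩ := nhds_basis_closedBall.mem_iff.mp
    ((isOpen_slitPlane.preimage (continuous_const.sub continuous_id)).mem_nhds hz₀)
  have hcont : ContinuousOn (fun p : ℂ × ℝ => (1 - p.1 * p.2)⁻¹) (closedBall z₀ δ ×ˢ Icc 0 1) :=
    ContinuousOn.inv₀ (by fun_prop) fun p hp =>
      slitPlane_ne_zero (one_sub_mul_ofReal_mem_slitPlane (hball hp.1) hp.2)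
  obtain ⟨C, hC⟩ :=
    ((isCompact_closedBall z₀ δ).prod isCompact_Icc).exists_bound_of_continuousOn hcont
  exact ⟨δ, hδ, C, fun x hx => ⟨hball hx, fun t ht => hC (x, t) ⟨hx, ht⟩⟩⟩

lemma hasDerivAt_li2 {z : ℂ} (hz : 1 - z ∈ slitPlane) (hz0 : z ≠ 0) :
    HasDerivAt li2 (-log (1 - z) / z) z := by
  obtain ⟨δ, hδ, C, hC⟩ := exists_closedBall_bound_inv_one_sub_mul hz
  have hderiv : ∀ x ∈ closedBall z δ, ∀ t ∈ Ioc (0 : ℝ) 1,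
      HasDerivAt (fun x : ℂ => log (1 - x * t) / t) (-(1 - x * t)⁻¹) x := by
    intro x hx t ht
    have hslit := one_sub_mul_ofReal_mem_slitPlane (hC x hx).1 (Ioc_subset_Icc_self ht)
    convert! ((((hasDerivAt_id x).mul_const (t : ℂ)).const_sub 1).clog hslit).div_const (t : ℂ)
      using 1
    have hne := slitPlane_ne_zero hslit
    have ht0 : (t : ℂ) ≠ 0 := ofReal_ne_zero.mpr ht.1.ne'
    simp only [id]
    field_simp
  have hdiff := intervalIntegral.hasDerivAt_integral_of_dominated_loc_of_deriv_le
    (closedBall_mem_nhds z hδ) (bound := fun _ => C)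
    (.of_forall fun x => (by fun_prop : Measurable _).aestronglyMeasurable)
    (intervalIntegrable_log_one_sub_mul_div hz) (by fun_prop)
    (.of_forall fun t ht x hx => by
      rw [uIoc_of_le zero_le_one] at ht
      simpa using (hC x hx).2 t (Ioc_subset_Icc_self ht))
    intervalIntegrable_const
    (.of_forall fun t ht x hx => hderiv x hx t (by rwa [uIoc_of_le zero_le_one] at ht))
  convert! hdiff.2.neg using 1
  rw [intervalIntegral.integral_neg, neg_neg, integral_inv_one_sub_mul hz hz0]

lemma hasDerivAt_li2_neg_exp_mul (c α : ℂ) (h : 1 + cexp (c * α) ∈ slitPlane) :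
    HasDerivAt (fun w => li2 (-cexp (c * w))) (-c * log (1 + cexp (c * α))) α := by
  have hz : 1 - -cexp (c * α) ∈ slitPlane := by rwa [sub_neg_eq_add]
  have hinner : HasDerivAt (fun w => -cexp (c * w)) (-(cexp (c * α) * c)) α := by
    simpa using ((hasDerivAt_id α).const_mul c).cexp.fun_neg
  convert! (hasDerivAt_li2 hz (neg_ne_zero.mpr (exp_ne_zero _))).comp α hinner using 1
  rw [sub_neg_eq_add]
  field_simp [exp_ne_zero]

def quadPoly {ι 𝕜 : Type*} [Fintype ι] [CommRing 𝕜] (A : Matrix ι ι 𝕜) (b α : ι → 𝕜) : 𝕜 :=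
  ∑ j, ∑ k, A j k * α j * α k + ∑ j, b j * α j

lemma hasDerivAt_quadPoly_update {ι 𝕜 : Type*} [Fintype ι] [DecidableEq ι]
    [NontriviallyNormedField 𝕜] (A : Matrix ι ι 𝕜) (b α : ι → 𝕜) (k : ι) :
    HasDerivAt (fun w => quadPoly A b (update α k w)) (((A + Aᵀ) *ᵥ α + b) k) (α k) := by
  have hu : ∀ j, HasDerivAt (fun w => update α k w j) ((Pi.single k 1 : ι → 𝕜) j) (α k) :=
    hasDerivAt_pi.mp (hasDerivAt_update α k (α k))
  have hquad := HasDerivAt.fun_sum (u := Finset.univ) fun j _ =>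
    HasDerivAt.fun_sum (u := Finset.univ) fun l _ => ((hu j).const_mul (A j l)).fun_mul (hu l)
  have hlin := HasDerivAt.fun_sum (u := Finset.univ) fun j _ => (hu j).const_mul (b j)
  convert! hquad.add hlin using 1
  simp [Pi.single_apply, mulVec, dotProduct, Finset.sum_add_distrib, add_mul]

lemma im_quadPoly_ofReal {ι : Type*} [Fintype ι] (A : Matrix ι ι ℝ) (b : ι → ℝ) (α : ι → ℂ) :
    (quadPoly (A.map ofReal) (fun j => (b j : ℂ)) α).im =
      ∑ k, (α k).im * (((A.map ofReal + (A.map ofReal)ᵀ) *ᵥ α + fun j => (b j : ℂ)) k).re := by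
  simp only [quadPoly, map_apply, add_im, im_sum, mul_im, mul_re, ofReal_re, ofReal_im, zero_mul,
    sub_zero, add_zero, Finset.sum_add_distrib, Pi.add_apply, mulVec, dotProduct, Matrix.add_apply,
    transpose_apply, add_mul, add_re, re_sum, mul_add, Finset.mul_sum]
  rw [Finset.sum_comm (f := fun j l => A j l * (α j).re * (α l).im)]
  simp only [mul_comm, mul_left_comm, add_comm]

lemma log_norm_neg_exp_neg_two_I_mul (α : ℂ) : Real.log ‖-cexp (-2 * I * α)‖ = 2 * α.im := by
  simp [norm_exp, mul_re]

theorem stmt7 (k0 : ℕ)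
    (Amat : Matrix (Fin k0) (Fin k0) ℝ) (b : Fin k0 → ℝ)
    (Q : (Fin k0 → ℂ) → ℂ)
    (hQ : ∀ α : Fin k0 → ℂ, Q α =
      ∑ j, ∑ k, (Amat j k : ℂ) * α j * α k + ∑ j, (b j : ℂ) * α j)
    (f : (Fin k0 → ℂ) → ℂ)
    (hf : ∀ α : Fin k0 → ℂ,
      f α = ∑ k, 2 * li2 (-Complex.exp (-2 * Complex.I * α k)) + Q α)
    (αc : Fin k0 → ℂ)
    (hdom : ∀ k, ∀ r : ℝ, 1 ≤ r → -Complex.exp (-2 * Complex.I * αc k) ≠ (r : ℂ))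
    (hcrit : ∀ k, deriv (fun z => f (Function.update αc k z)) (αc k) = 0) :
    (f αc).im = ∑ k, 2 * blochWigner (-Complex.exp (-2 * Complex.I * αc k)) := by
  set A : Matrix (Fin k0) (Fin k0) ℂ := Amat.map ofReal
  set q : Fin k0 → ℂ := (A + Aᵀ) *ᵥ αc + fun j => (b j : ℂ)
  have hQ' : Q = quadPoly A (fun j => (b j : ℂ)) := funext hQ
  have hstat : ∀ k, (q k).re = 4 * arg (1 + cexp (-2 * I * αc k)) := by
    intro k
    have hslit := one_sub_mem_slitPlane_of_forall_ne (hdom k)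
    rw [sub_neg_eq_add] at hslit
    set w := 1 + cexp (-2 * I * αc k)
    have hderiv : HasDerivAt (fun x => f (update αc k x))
        (2 * (-(-2 * I) * log w) + q k) (αc k) := by
      simp_rw [hf, hQ']
      exact (hasDerivAt_sum_apply_update (fun _ x => 2 * li2 (-cexp (-2 * I * x))) αc k
        ((hasDerivAt_li2_neg_exp_mul _ _ hslit).const_mul 2)).add
        (hasDerivAt_quadPoly_update A _ αc k)
    have hq : q k = -(4 * I * log w) := by
      linear_combination hderiv.deriv.symm.trans (hcrit k)
    rw [hq, ← log_im]
    simp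
  have him : (f αc).im =
      ∑ k, (2 * li2 (-cexp (-2 * I * αc k))).im + ∑ k, (αc k).im * (q k).re := by
    rw [hf, hQ', add_im, im_sum, im_quadPoly_ofReal]
  rw [him, ← Finset.sum_add_distrib]
  refine Finset.sum_congr rfl fun k _ => ?_
  rw [hstat k, blochWigner, sub_neg_eq_add, log_norm_neg_exp_neg_two_I_mul, mul_im]
  simp only [re_ofNat, im_ofNat, zero_mul, add_zero]
  ring
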